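/- arXiv:2504.07607 — 2 statements merged into one kernel-verified Lean document; each statement's English description precedes it below -/
import Mathlib

section
/- Assume μ > L_f, let λ > 0, and set γ = (μ − L_f)λ/(μ − L_f + λ). Fix x, z ∈ E and y ∈ F. Suppose u ∈ X minimizes w ↦ K(w, y, z) + (λ/2)‖w − x‖² over X and x* ∈ X minimizes w ↦ K(w, y, z) over X. Then γ·‖x − x*‖ ≤ λ·‖x − u‖. -/
/-!
Both points satisfy first-order variational inequalities over the convex set `X`:
`⟪∇K(x*), w - x*⟫ ≥ 0` and `⟪∇K(u) + λ (u - x), w - u⟫ ≥ 0` for all `w ∈ X`. Since `∇f` is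
`L_f`-Lipschitz and the other terms of `K` are convex quadratics, one of them `μ`-strongly convex,
`∇ₓK` is `(μ - L_f)`-strongly monotone. Testing each inequality at the other point and adding gives
`(μ - L_f) ‖u - x*‖ ≤ λ ‖u - x‖`, and the triangle inequality through `u` yields the claim.
-/

open scoped RealInnerProductSpace

theorem IsMinOn.hasFDerivAt_nonneg_of_convex {E : Type*} [NormedAddCommGroup E]
    [NormedSpace ℝ E] {g : E → ℝ} {g' : StrongDual ℝ E} {X : Set E} {p w : E}
    (hX : Convex ℝ X) (hmin : IsMinOn g X p) (hg : HasFDerivAt g g' p) (hp : p ∈ X)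
    (hw : w ∈ X) : 0 ≤ g' (w - p) :=
  hmin.localize.hasFDerivWithinAt_nonneg hg.hasFDerivWithinAt
    (sub_mem_posTangentConeAt_of_segment_subset (hX.segment_subset hp hw))

section

variable {E : Type*} [NormedAddCommGroup E] [InnerProductSpace ℝ E]

theorem mul_norm_sub_le_of_isMinOn_prox {g : E → ℝ} {g' : E → StrongDual ℝ E} {X : Set E}
    {σ lam : ℝ} {x u xs : E} (hX : Convex ℝ X) (hg : ∀ w, HasFDerivAt g (g' w) w)
    (hmono : ∀ v w, σ * ‖v - w‖ ^ 2 ≤ (g' v - g' w) (v - w)) (hlam : 0 ≤ lam)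
    (hu : u ∈ X) (hu_min : IsMinOn (fun w => g w + lam / 2 * ‖w - x‖ ^ 2) X u)
    (hxs : xs ∈ X) (hxs_min : IsMinOn g X xs) :
    σ * ‖u - xs‖ ≤ lam * ‖u - x‖ := by
  have hprox : HasFDerivAt (fun w => g w + lam / 2 * ‖w - x‖ ^ 2)
      (g' u + lam • innerSL ℝ (u - x)) u := by
    refine ((hg u).fun_add
      (((hasFDerivAt_id u).sub_const x).norm_sq.const_mul (lam / 2))).congr_fderiv ?_
    ext v
    simp only [add_apply, smul_apply, innerSL_apply_apply, ContinuousLinearMap.comp_apply,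
      ContinuousLinearMap.id_apply, id, smul_eq_mul, nsmul_eq_mul]
    ring
  have hvi_u := hu_min.hasFDerivAt_nonneg_of_convex hX hprox hu hxs
  have hvi_xs := hxs_min.hasFDerivAt_nonneg_of_convex hX (hg xs) hxs hu
  simp only [add_apply, smul_apply, innerSL_apply_apply, smul_eq_mul] at hvi_u
  have hsq : σ * ‖u - xs‖ ^ 2 ≤ lam * ‖u - x‖ * ‖u - xs‖ :=
    calc σ * ‖u - xs‖ ^ 2 ≤ (g' u - g' xs) (u - xs) := hmono u xs
      _ ≤ lam * ⟪u - x, xs - u⟫ := by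
        rw [← neg_sub xs u, map_neg] at hvi_xs ⊢
        rw [sub_apply]
        linarith
      _ ≤ lam * ‖u - x‖ * ‖u - xs‖ := by
        rw [mul_assoc, ← norm_sub_rev xs u]
        exact mul_le_mul_of_nonneg_left (real_inner_le_norm _ _) hlam
  rcases (norm_nonneg (u - xs)).eq_or_lt with h0 | hpos
  · rw [← h0, mul_zero]
    positivity
  · rw [sq, ← mul_assoc] at hsq
    exact le_of_mul_le_mul_right hsq hpos

end

noncomputable section ProxAugLagrangian

variable {E F : Type*} [NormedAddCommGroup E] [InnerProductSpace ℝ E]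
  [NormedAddCommGroup F] [InnerProductSpace ℝ F] (A : E →L[ℝ] F) (b : F) (ρ μ : ℝ)

def proxAugLagrangian (f : E → ℝ) (x : E) (y : F) (z : E) : ℝ :=
  f x + ⟪A x - b, y⟫ + (ρ / 2) * ‖A x - b‖ ^ 2 + (μ / 2) * ‖x - z‖ ^ 2

/-- `v ↦ ⟪∇f x + A* (y + ρ (A x - b)) + μ (x - z), v⟫`, with the adjoint moved across the inner
product so that `F` need not be complete. -/
def proxAugLagrangianFDeriv (f' : E → E) (y : F) (z x : E) : StrongDual ℝ E :=
  innerSL ℝ (f' x + μ • (x - z)) + (innerSL ℝ (y + ρ • (A x - b))).comp A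

theorem hasFDerivAt_proxAugLagrangian [CompleteSpace E] {f : E → ℝ} {f' : E → E} {x : E}
    (hf : HasGradientAt f (f' x) x) (y : F) (z : E) :
    HasFDerivAt (proxAugLagrangian A b ρ μ f · y z)
      (proxAugLagrangianFDeriv A b ρ μ f' y z x) x := by
  have hAx : HasFDerivAt (fun w => A w - b) A x := A.hasFDerivAt.sub_const b
  refine ((((hf.hasFDerivAt.fun_add (hAx.inner ℝ (hasFDerivAt_const y x))).fun_add
    (hAx.norm_sq.const_mul (ρ / 2))).fun_add
    (((hasFDerivAt_id x).sub_const z).norm_sq.const_mul (μ / 2)))).congr_fderiv ?_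
  ext v
  simp only [proxAugLagrangianFDeriv, add_apply, sub_apply, smul_apply, zero_apply,
    ContinuousLinearMap.comp_apply, ContinuousLinearMap.prod_apply, ContinuousLinearMap.comp_id,
    ContinuousLinearMap.sub_comp, ContinuousLinearMap.add_comp, ContinuousLinearMap.smul_comp,
    fderivInnerCLM_apply, InnerProductSpace.toDual_apply_apply, coe_innerSL_apply, real_inner_comm,
    inner_zero_right, map_add, map_sub, map_smul, id_eq, zero_add, nsmul_eq_mul, Nat.cast_ofNat,
    smul_eq_mul]
  ring

theorem proxAugLagrangianFDeriv_strongMono {f' : E → E} {Lf : ℝ}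
    (hlip : ∀ u v, ‖f' u - f' v‖ ≤ Lf * ‖u - v‖) (hρ : 0 ≤ ρ) (y : F) (z u v : E) :
    (μ - Lf) * ‖u - v‖ ^ 2 ≤
      (proxAugLagrangianFDeriv A b ρ μ f' y z u - proxAugLagrangianFDeriv A b ρ μ f' y z v)
        (u - v) := by
  have hexpand : (proxAugLagrangianFDeriv A b ρ μ f' y z u
      - proxAugLagrangianFDeriv A b ρ μ f' y z v) (u - v)
      = ⟪f' u - f' v, u - v⟫ + ρ * ‖A (u - v)‖ ^ 2 + μ * ‖u - v‖ ^ 2 := by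
    simp only [proxAugLagrangianFDeriv, sub_apply, add_apply, ContinuousLinearMap.comp_apply,
      innerSL_apply_apply, map_sub, inner_add_left, inner_sub_left, inner_sub_right,
      real_inner_smul_left, ← real_inner_self_eq_norm_sq]
    ring
  have hlower : -(Lf * ‖u - v‖ ^ 2) ≤ ⟪f' u - f' v, u - v⟫ :=
    calc -(Lf * ‖u - v‖ ^ 2) ≤ -(‖f' u - f' v‖ * ‖u - v‖) := by
          rw [sq, ← mul_assoc]
          exact neg_le_neg (mul_le_mul_of_nonneg_right (hlip u v) (norm_nonneg _))
      _ ≤ ⟪f' u - f' v, u - v⟫ := neg_le_of_abs_le (abs_real_inner_le_norm _ _)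
  rw [hexpand]
  nlinarith [mul_nonneg hρ (sq_nonneg ‖A (u - v)‖)]

end ProxAugLagrangian

theorem stmt_7_general
    {E F : Type*}
    [NormedAddCommGroup E] [InnerProductSpace ℝ E] [FiniteDimensional ℝ E]
    [NormedAddCommGroup F] [InnerProductSpace ℝ F]
    (A : E →L[ℝ] F) (b : F) (X : Set E)
    (hXcv : Convex ℝ X)
    (f : E → ℝ) (f' : E → E) (Lf : ℝ)
    (hf : ∀ x, HasGradientAt f (f' x) x)
    (hlip : ∀ u v, ‖f' u - f' v‖ ≤ Lf * ‖u - v‖)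
    (ρ μ : ℝ) (hρ : 0 ≤ ρ)
    (K : E → F → E → ℝ)
    (hK : ∀ x y z, K x y z =
      f x + ⟪A x - b, y⟫ + (ρ/2) * ‖A x - b‖^2 + (μ/2) * ‖x - z‖^2)
    (hμLf : Lf < μ) (lam : ℝ) (hlam : 0 < lam)
    (γ : ℝ) (hγ : γ = (μ - Lf)*lam/(μ - Lf + lam))
    (x z : E) (y : F) (u xstar : E)
    (hu : u ∈ X ∧ ∀ w ∈ X,
      K u y z + (lam/2) * ‖u - x‖^2 ≤ K w y z + (lam/2) * ‖w - x‖^2)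
    (hxstar : xstar ∈ X ∧ ∀ w ∈ X, K xstar y z ≤ K w y z) :
    γ * ‖x - xstar‖ ≤ lam * ‖x - u‖ := by
  have hK' : (K · y z) = (proxAugLagrangian A b ρ μ f · y z) := funext fun w => hK w y z
  have hdist : (μ - Lf) * ‖u - xstar‖ ≤ lam * ‖x - u‖ := by
    rw [norm_sub_rev x u]
    exact mul_norm_sub_le_of_isMinOn_prox hXcv (g := (K · y z))
      (fun w => hK' ▸ hasFDerivAt_proxAugLagrangian A b ρ μ (hf w) y z)
      (proxAugLagrangianFDeriv_strongMono A b ρ μ hlip hρ y z) hlam.le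
      hu.1 hu.2 hxstar.1 hxstar.2
  have hσ : 0 < μ - Lf := sub_pos.2 hμLf
  rw [hγ, div_mul_eq_mul_div, div_le_iff₀ (by positivity)]
  calc (μ - Lf) * lam * ‖x - xstar‖
      ≤ lam * ((μ - Lf) * ‖x - u‖ + (μ - Lf) * ‖u - xstar‖) := by
        have := mul_le_mul_of_nonneg_left (norm_sub_le_norm_sub_add_norm_sub x u xstar) hσ.le
        nlinarith
    _ ≤ lam * ((μ - Lf) * ‖x - u‖ + lam * ‖x - u‖) := by gcongr
    _ = lam * ‖x - u‖ * (μ - Lf + lam) := by ring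

theorem stmt_7
    {E F : Type*}
    [NormedAddCommGroup E] [InnerProductSpace ℝ E] [FiniteDimensional ℝ E]
    [NormedAddCommGroup F] [InnerProductSpace ℝ F] [FiniteDimensional ℝ F]
    (A : E →L[ℝ] F) (b : F) (X : Set E)
    (hXne : X.Nonempty) (hXcl : IsClosed X) (hXcv : Convex ℝ X)
    (f : E → ℝ) (f' : E → E) (Lf : ℝ) (hLf : 0 ≤ Lf)
    (hf : ∀ x, HasGradientAt f (f' x) x)
    (hlip : ∀ u v, ‖f' u - f' v‖ ≤ Lf * ‖u - v‖)
    (ρ μ : ℝ) (hρ : 0 ≤ ρ) (hμ : 0 < μ)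
    (K : E → F → E → ℝ)
    (hK : ∀ x y z, K x y z =
      f x + ⟪A x - b, y⟫ + (ρ/2) * ‖A x - b‖^2 + (μ/2) * ‖x - z‖^2)
    (hμLf : Lf < μ) (lam : ℝ) (hlam : 0 < lam)
    (γ : ℝ) (hγ : γ = (μ - Lf)*lam/(μ - Lf + lam))
    (x z : E) (y : F) (u xstar : E)
    (hu : u ∈ X ∧ ∀ w ∈ X,
      K u y z + (lam/2) * ‖u - x‖^2 ≤ K w y z + (lam/2) * ‖w - x‖^2)
    (hxstar : xstar ∈ X ∧ ∀ w ∈ X, K xstar y z ≤ K w y z) :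
    γ * ‖x - xstar‖ ≤ lam * ‖x - u‖ :=
  stmt_7_general A b X hXcv f f' Lf hf hlip ρ μ hρ K hK hμLf lam hlam γ hγ x z y u xstar hu hxstar
end

section
/- Let λ > 0 with μ + λ > L_f and set γ_s = μ − L_f + λ. Fix x, z, z' ∈ E and y ∈ F. Suppose u ∈ X minimizes w ↦ K(w, y, z) + (λ/2)‖w − x‖² over X and u'' ∈ X minimizes w ↦ K(w, y, z') + (λ/2)‖w − x‖² over X. Then ‖u − u''‖ ≤ (μ/γ_s)·‖z − z'‖. -/
open MeasureTheory
open scoped RealInnerProductSpace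

private lemma descent_lower' {E : Type*}
    [NormedAddCommGroup E] [InnerProductSpace ℝ E] [CompleteSpace E]
    (f : E → ℝ) (f' : E → E) (Lf : ℝ)
    (hf : ∀ x, HasGradientAt f (f' x) x)
    (hlip : ∀ u v, ‖f' u - f' v‖ ≤ Lf * ‖u - v‖) (w v : E) :
    f w + ⟪f' w, v - w⟫ - Lf/2 * ‖v - w‖^2 ≤ f v := by
  set d := v - w with hd
  have hline : ∀ t : ℝ, HasDerivAt (fun t : ℝ => w + t • d) d t := fun t => by
    simpa using ((hasDerivAt_id t).smul_const d).const_add w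
  have hq : ∀ t : ℝ, HasDerivAt (fun t : ℝ => f (w + t • d)) ⟪f' (w + t • d), d⟫ t := by
    intro t
    have h1 := (hf (w + t • d)).hasFDerivAt.comp_hasDerivAt t (hline t)
    simp [InnerProductSpace.toDual_apply_apply] at h1
    exact h1
  set c : ℝ := ⟪f' w, d⟫ with hc
  set k : ℝ := Lf/2 * ‖d‖^2 with hk
  set r : ℝ → ℝ := fun t => f (w + t • d) - t * c + k * t^2 with hr
  have hr' : ∀ t : ℝ, HasDerivAt r (⟪f' (w + t • d), d⟫ - c + k * (2 * t)) t := by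
    intro t
    have h1 : HasDerivAt (fun t : ℝ => t * c) c t := by
      simpa using (hasDerivAt_id t).mul_const c
    have h2 : HasDerivAt (fun t : ℝ => k * t^2) (k * (2 * t)) t := by
      simpa [pow_one] using ((hasDerivAt_pow 2 t).const_mul k)
    exact ((hq t).sub h1).add h2
  have hmono : MonotoneOn r (Set.Icc 0 1) := by
    apply monotoneOn_of_deriv_nonneg (convex_Icc 0 1)
    · exact fun t _ => ((hr' t).differentiableAt.continuousAt).continuousWithinAt
    · exact fun t _ => ((hr' t).differentiableAt).differentiableWithinAt
    · intro t ht
      rw [interior_Icc] at ht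
      rw [(hr' t).deriv]
      have hip2 : -⟪f' (w + t • d) - f' w, d⟫ ≤ ‖f' (w + t • d) - f' w‖ * ‖d‖ := by
        have h0 := real_inner_le_norm (f' w - f' (w + t • d)) d
        have he : f' w - f' (w + t • d) = -(f' (w + t • d) - f' w) := by abel
        rw [he, inner_neg_left, norm_neg] at h0
        simpa using h0
      have hl : ‖f' (w + t • d) - f' w‖ ≤ Lf * (t * ‖d‖) := by
        have h0 := hlip (w + t • d) w
        have he : w + t • d - w = t • d := by abel
        rw [he, norm_smul] at h0
        simpa [abs_of_pos ht.1] using h0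
      have hsub : ⟪f' (w + t • d), d⟫ - c = ⟪f' (w + t • d) - f' w, d⟫ := by
        rw [inner_sub_left]
      have hmul := mul_le_mul_of_nonneg_right hl (norm_nonneg d)
      have hk2 : k * (2 * t) = Lf * (t * ‖d‖) * ‖d‖ := by rw [hk]; ring
      linarith [hsub.ge, hsub.le, hip2, hmul]
  have h01 := hmono (Set.mem_Icc.mpr ⟨le_refl 0, zero_le_one⟩)
    (Set.mem_Icc.mpr ⟨zero_le_one, le_refl 1⟩) zero_le_one
  have hr0 : r 0 = f w := by simp [hr]
  have hwd : w + d = v := by rw [hd]; abel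
  have hr1 : r 1 = f v - c + k := by simp [hr, hwd]
  rw [hr0, hr1] at h01
  rw [hc, hk] at h01
  linarith

private lemma combo_norm_sq' {E : Type*}
    [NormedAddCommGroup E] [InnerProductSpace ℝ E] (t : ℝ) (a b : E) :
    ‖t • a + (1-t) • b‖^2 = t*‖a‖^2 + (1-t)*‖b‖^2 - t*(1-t)*‖a-b‖^2 := by
  have h : ∀ v : E, ‖v‖^2 = ⟪v, v⟫ := fun v => (real_inner_self_eq_norm_sq v).symm
  rw [h, h, h, h]
  simp only [inner_add_left, inner_add_right, inner_smul_left, inner_smul_right,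
    inner_sub_left, inner_sub_right, RCLike.ofReal_real_eq_id, id_eq, conj_trivial]
  rw [real_inner_comm b a]
  ring

private lemma weak_cvx' {E : Type*}
    [NormedAddCommGroup E] [InnerProductSpace ℝ E] [CompleteSpace E]
    (f : E → ℝ) (f' : E → E) (Lf : ℝ)
    (hf : ∀ x, HasGradientAt f (f' x) x)
    (hlip : ∀ u v, ‖f' u - f' v‖ ≤ Lf * ‖u - v‖)
    (t : ℝ) (ht0 : 0 ≤ t) (ht1 : t ≤ 1) (a b : E) :
    f (t • a + (1-t) • b) ≤ t * f a + (1-t) * f b + Lf/2 * (t*(1-t)) * ‖a-b‖^2 := by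
  set m := t • a + (1-t) • b with hm
  have ha : a - m = (1-t) • (a-b) := by rw [hm]; module
  have hb : b - m = (-t) • (a-b) := by rw [hm]; module
  have h1 := descent_lower' f f' Lf hf hlip m a
  have h2 := descent_lower' f f' Lf hf hlip m b
  rw [ha] at h1
  rw [hb] at h2
  rw [norm_smul, inner_smul_right, Real.norm_eq_abs,
    abs_of_nonneg (by linarith : (0:ℝ) ≤ 1 - t), mul_pow] at h1
  rw [norm_smul, inner_smul_right, Real.norm_eq_abs, abs_neg,
    abs_of_nonneg ht0, mul_pow] at h2
  have e1 := mul_le_mul_of_nonneg_left h1 ht0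
  have e2 := mul_le_mul_of_nonneg_left h2 (by linarith : (0:ℝ) ≤ 1 - t)
  nlinarith [e1, e2]
theorem stmt_10
    {E F : Type*}
    [NormedAddCommGroup E] [InnerProductSpace ℝ E] [FiniteDimensional ℝ E]
    [NormedAddCommGroup F] [InnerProductSpace ℝ F] [FiniteDimensional ℝ F]
    (A : E →L[ℝ] F) (b : F) (X : Set E)
    (hXne : X.Nonempty) (hXcl : IsClosed X) (hXcv : Convex ℝ X)
    (f : E → ℝ) (f' : E → E) (Lf : ℝ) (hLf : 0 ≤ Lf)
    (hf : ∀ x, HasGradientAt f (f' x) x)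
    (hlip : ∀ u v, ‖f' u - f' v‖ ≤ Lf * ‖u - v‖)
    (ρ μ : ℝ) (hρ : 0 ≤ ρ) (hμ : 0 < μ)
    (K : E → F → E → ℝ)
    (hK : ∀ x y z, K x y z =
      f x + ⟪A x - b, y⟫ + (ρ/2) * ‖A x - b‖^2 + (μ/2) * ‖x - z‖^2)
    (lam : ℝ) (hlam : 0 < lam) (hml : Lf < μ + lam)
    (γs : ℝ) (hγs : γs = μ - Lf + lam)
    (x z z' : E) (y : F) (u u'' : E)
    (hu : u ∈ X ∧ ∀ w ∈ X,
      K u y z + (lam/2) * ‖u - x‖^2 ≤ K w y z + (lam/2) * ‖w - x‖^2)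
    (hu'' : u'' ∈ X ∧ ∀ w ∈ X,
      K u'' y z' + (lam/2) * ‖u'' - x‖^2 ≤ K w y z' + (lam/2) * ‖w - x‖^2) :
    ‖u - u''‖ ≤ (μ/γs) * ‖z - z'‖ := by
  have hγpos : 0 < γs := by rw [hγs]; linarith
  set g : E → E → ℝ := fun c w =>
    f w + ⟪A w - b, y⟫ + ρ/2 * ‖A w - b‖^2 + μ/2 * ‖w - c‖^2 + lam/2 * ‖w - x‖^2
    with hg
  clear_value g
  have hgK : ∀ c w, g c w = K w y c + (lam/2) * ‖w - x‖^2 := by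
    intro c w
    simp only [hg]
    rw [hK]
  -- strong convexity inequality
  have key : ∀ (c : E) (a bb : E) (t : ℝ), 0 ≤ t → t ≤ 1 →
      g c (t • a + (1-t) • bb) ≤
        t * g c a + (1-t) * g c bb - γs/2 * (t*(1-t)) * ‖a - bb‖^2 := by
    intro c a bb t ht0 ht1
    set m := t • a + (1-t) • bb with hm
    have hA : A m - b = t • (A a - b) + (1-t) • (A bb - b) := by
      have h0 : A m = t • A a + (1-t) • A bb := by
        rw [hm]; simp only [map_add, ContinuousLinearMap.map_smul]
      rw [h0]; module
    have hmc : m - c = t • (a - c) + (1-t) • (bb - c) := by rw [hm]; module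
    have hmx : m - x = t • (a - x) + (1-t) • (bb - x) := by rw [hm]; module
    have hNA : ‖A m - b‖^2 = t*‖A a - b‖^2 + (1-t)*‖A bb - b‖^2
        - t*(1-t)*‖(A a - b) - (A bb - b)‖^2 := by
      rw [hA, combo_norm_sq']
    have ec : (a - c) - (bb - c) = a - bb := by abel
    have ex : (a - x) - (bb - x) = a - bb := by abel
    have hNc : ‖m - c‖^2 = t*‖a - c‖^2 + (1-t)*‖bb - c‖^2 - t*(1-t)*‖a - bb‖^2 := by
      rw [hmc, combo_norm_sq', ec]
    have hNx : ‖m - x‖^2 = t*‖a - x‖^2 + (1-t)*‖bb - x‖^2 - t*(1-t)*‖a - bb‖^2 := by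
      rw [hmx, combo_norm_sq', ex]
    have hInner : ⟪A m - b, y⟫ = t * ⟪A a - b, y⟫ + (1-t) * ⟪A bb - b, y⟫ := by
      rw [hA, inner_add_left, real_inner_smul_left, real_inner_smul_left]
    have hF := weak_cvx' f f' Lf hf hlip t ht0 ht1 a bb
    rw [← hm] at hF
    have hAnn : 0 ≤ ρ/2 * (t*(1-t)) * ‖(A a - b) - (A bb - b)‖^2 :=
      mul_nonneg (mul_nonneg (by linarith) (mul_nonneg ht0 (by linarith))) (sq_nonneg _)
    have hexp : t * g c a + (1-t) * g c bb - γs/2 * (t*(1-t)) * ‖a - bb‖^2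
        = (t * f a + (1-t) * f bb + Lf/2 * (t*(1-t)) * ‖a - bb‖^2)
          + ⟪A m - b, y⟫ + ρ/2 * ‖A m - b‖^2 + μ/2 * ‖m - c‖^2 + lam/2 * ‖m - x‖^2
          + ρ/2 * (t*(1-t)) * ‖(A a - b) - (A bb - b)‖^2 := by
      simp only [hg]
      rw [hNA, hNc, hNx, hInner, hγs]
      ring
    have hgm : g c m = f m + ⟪A m - b, y⟫ + ρ/2 * ‖A m - b‖^2 + μ/2 * ‖m - c‖^2
        + lam/2 * ‖m - x‖^2 := by simp only [hg]
    rw [hgm, hexp]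
    linarith [hF, hAnn]
  -- quadratic growth at constrained minimizers
  have growth : ∀ (c : E) (v : E), v ∈ X → (∀ w ∈ X, g c v ≤ g c w) →
      ∀ w ∈ X, g c v + γs/2 * ‖w - v‖^2 ≤ g c w := by
    intro c v hv hmin w hw
    set s := ‖w - v‖^2 with hs
    clear_value s
    have hstep : ∀ t ∈ Set.Ioc (0:ℝ) 1, γs/2 * (1-t) * s ≤ g c w - g c v := by
      intro t ht
      have hp : t • w + (1-t) • v ∈ X :=
        hXcv hw hv ht.1.le (by linarith [ht.2]) (by ring)
      have h1 := hmin _ hp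
      have h2 := key c w v t ht.1.le ht.2
      have h3 : t * (γs/2 * (1-t) * s) ≤ t * (g c w - g c v) := by
        rw [hs]; linarith [h1, h2]
      have h4 := (mul_le_mul_iff_right₀ ht.1).mp h3
      linarith
    have hcont : Continuous fun t : ℝ => γs/2 * (1-t) * s := by fun_prop
    have hT : Filter.Tendsto (fun t : ℝ => γs/2 * (1-t) * s)
        (nhdsWithin 0 (Set.Ioi 0)) (nhds (γs/2 * (1-(0:ℝ)) * s)) :=
      (hcont.tendsto 0).mono_left nhdsWithin_le_nhds
    have hev : ∀ᶠ t in nhdsWithin (0:ℝ) (Set.Ioi 0), γs/2 * (1-t) * s ≤ g c w - g c v := by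
      filter_upwards [Ioc_mem_nhdsGT_of_mem (Set.mem_Ico.mpr ⟨le_refl 0, one_pos⟩)]
        with t ht using hstep t ht
    have hlim := le_of_tendsto hT hev
    simp only [sub_zero, mul_one] at hlim
    linarith
  have hminu : ∀ w ∈ X, g z u ≤ g z w := by
    intro w hw; rw [hgK, hgK]; exact hu.2 w hw
  have hminu'' : ∀ w ∈ X, g z' u'' ≤ g z' w := by
    intro w hw; rw [hgK, hgK]; exact hu''.2 w hw
  have key1 := growth z u hu.1 hminu u'' hu''.1
  have key2 := growth z' u'' hu''.1 hminu'' u hu.1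
  have hnrev : ‖u'' - u‖ = ‖u - u''‖ := norm_sub_rev _ _
  rw [hnrev] at key1
  have hdiff : (g z u'' - g z u) + (g z' u - g z' u'') = μ * ⟪u - u'', z - z'⟫ := by
    simp only [hg]
    have h : ∀ (p q : E), ‖p - q‖^2 = ‖p‖^2 - 2*⟪p,q⟫ + ‖q‖^2 := fun p q => by
      rw [@norm_sub_sq_real]
    rw [h u z, h u z', h u'' z, h u'' z']
    simp only [inner_sub_left, inner_sub_right]
    ring
  have hCS : ⟪u - u'', z - z'⟫ ≤ ‖u - u''‖ * ‖z - z'‖ := real_inner_le_norm _ _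
  have hCSμ := mul_le_mul_of_nonneg_left hCS hμ.le
  have hmain : γs * ‖u - u''‖^2 ≤ μ * (‖u - u''‖ * ‖z - z'‖) := by
    linarith [key1, key2, hdiff, hCSμ]
  rcases (norm_nonneg (u - u'')).lt_or_eq with hn | hn
  · rw [div_mul_eq_mul_div, le_div_iff₀ hγpos]
    have h5 : ‖u - u''‖ * (‖u - u''‖ * γs) ≤ ‖u - u''‖ * (μ * ‖z - z'‖) := by
      nlinarith [hmain]
    have h6 := (mul_le_mul_iff_right₀ hn).mp h5
    linarith
  · rw [← hn]
    positivity
end
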